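/- Every 3×3 minimal noncyclotomic integer symmetric matrix all of whose entries have absolute value at most 2 and having some entry of absolute value exactly 2 is equivalent to one of the following eight matrices (given by their rows): [(0,2,2),(2,0,2),(2,2,0)], [(0,2,2),(2,0,1),(2,1,0)], [(0,2,1),(2,0,1),(1,1,0)], [(0,2,0),(2,0,2),(0,2,0)], [(0,2,1),(2,0,1),(1,1,1)], [(0,2,1),(2,0,1),(1,1,−1)], [(0,2,0),(2,0,1),(0,1,1)], [(0,2,0),(2,0,1),(0,1,0)]. Moreover each of these eight matrices has spectral radius at least √5 and Mahler measure greater than 2.081. -/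

import Mathlib

open Polynomial Matrix

noncomputable section

/-- Lehmer's polynomial. -/
def lehmer : Polynomial ℤ :=
  X ^ 10 + X ^ 9 - X ^ 7 - X ^ 6 - X ^ 5 - X ^ 4 - X ^ 3 + X + 1

/-- Spectral radius of an integer symmetric matrix: the maximum of the absolute
values of the (real) roots of its characteristic polynomial. -/
def specRad {d : ℕ} (A : Matrix (Fin d) (Fin d) ℤ) : ℝ :=
  sSup {r : ℝ | ∃ x ∈ (A.charpoly.map (Int.castRingHom ℝ)).roots, |x| = r}

/-- The associated reciprocal polynomial `z^d * p(z + 1/z)` of a polynomial `p`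
of degree (at most) `d`. -/
def recipPoly (d : ℕ) (p : Polynomial ℤ) : Polynomial ℤ :=
  ∑ i ∈ Finset.range (d + 1), Polynomial.C (p.coeff i) * X ^ (d - i) * (X ^ 2 + 1) ^ i

/-- Mahler measure of an integer symmetric matrix: the Mahler measure of its
associated reciprocal polynomial. -/
def mahlerMeasure {d : ℕ} (A : Matrix (Fin d) (Fin d) ℤ) : ℝ :=
  ((((recipPoly d A.charpoly).map (Int.castRingHom ℂ)).roots).map
    (fun z => max 1 ‖z‖)).prod

/-- Equivalence of integer symmetric matrices: `B = ε • (Pᵀ * A * P)` for a sign `ε`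
and a signed permutation matrix `P`. -/
def MEquiv {m n : Type*} [Fintype m] [DecidableEq m] [Fintype n] [DecidableEq n]
    (A : Matrix m m ℤ) (B : Matrix n n ℤ) : Prop :=
  ∃ (ε : ℤ) (P : Matrix m n ℤ), (ε = 1 ∨ ε = -1) ∧ Pᵀ * P = 1 ∧ P * Pᵀ = 1 ∧
    B = ε • (Pᵀ * A * P)

/-- A matrix is indecomposable when its underlying graph is connected. -/
def Indecomposable {m : Type*} [Fintype m] (A : Matrix m m ℤ) : Prop :=
  (SimpleGraph.fromRel (fun i j => A i j ≠ 0)).Connected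

/-- The principal submatrix obtained by deleting row `i` and column `i`. -/
def deleteRC {d : ℕ} (A : Matrix (Fin d) (Fin d) ℤ) (i : Fin d) :
    Matrix (Fin (d - 1)) (Fin (d - 1)) ℤ :=
  A.submatrix
    (fun j => Fin.cast (Nat.succ_pred_eq_of_pos i.pos)
      ((Fin.cast (Nat.succ_pred_eq_of_pos i.pos).symm i).succAbove j))
    (fun j => Fin.cast (Nat.succ_pred_eq_of_pos i.pos)
      ((Fin.cast (Nat.succ_pred_eq_of_pos i.pos).symm i).succAbove j))

/-- Minimal noncyclotomic matrices. -/
def MinimalNoncyclotomic {d : ℕ} (A : Matrix (Fin d) (Fin d) ℤ) : Prop :=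
  2 < specRad A ∧ ∀ i : Fin d, specRad (deleteRC A i) ≤ 2


def E1 : Matrix (Fin 3) (Fin 3) ℤ := !![0,2,2; 2,0,2; 2,2,0]
def E2 : Matrix (Fin 3) (Fin 3) ℤ := !![0,2,2; 2,0,1; 2,1,0]
def E3 : Matrix (Fin 3) (Fin 3) ℤ := !![0,2,1; 2,0,1; 1,1,0]
def E4 : Matrix (Fin 3) (Fin 3) ℤ := !![0,2,0; 2,0,2; 0,2,0]
def E5 : Matrix (Fin 3) (Fin 3) ℤ := !![0,2,1; 2,0,1; 1,1,1]
def E6 : Matrix (Fin 3) (Fin 3) ℤ := !![0,2,1; 2,0,1; 1,1,-1]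
def E7 : Matrix (Fin 3) (Fin 3) ℤ := !![0,2,0; 2,0,1; 0,1,1]
def E8 : Matrix (Fin 3) (Fin 3) ℤ := !![0,2,0; 2,0,1; 0,1,0]

/-!
Write a symmetric `A` as `symm3 a b c d e f`. If `A` is minimal noncyclotomic, every 2×2
principal submatrix `B` has spectrum in `[-2, 2]`, so `det (2 - B) ≥ 0` and `det (2 + B) ≥ 0`;
and `χ_A` has a root outside `[-2, 2]`, so `χ_A(2 + y)` and `-χ_A(-2 - y)` cannot both have
nonnegative coefficients. A kernel computation over the `5⁶` entry tuples shows that the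
survivors with an entry `±2` are, up to sign and signed permutation, the eight listed matrices.

For the bounds: an eigenvalue `λ` with `|λ| ≥ c + c⁻¹ ≥ 2` yields a root `z` of the reciprocal
polynomial with `z + z⁻¹ = λ` and `|z| ≥ c`, and distinct eigenvalues yield distinct roots.
The eigenvalues are located by the intermediate value theorem.
-/

lemma Polynomial.exists_isRoot_mem_uIcc_of_eval_mul_nonpos {p : ℝ[X]} {a b : ℝ}
    (h : p.eval a * p.eval b ≤ 0) : ∃ x ∈ Set.uIcc a b, p.IsRoot x := by
  have h0 : (0 : ℝ) ∈ Set.uIcc (p.eval a) (p.eval b) := by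
    rw [Set.mem_uIcc]
    rcases mul_nonpos_iff.1 h with h | h
    · exact Or.inr ⟨h.2, h.1⟩
    · exact Or.inl h
  exact intermediate_value_uIcc p.continuous.continuousOn h0

lemma Polynomial.eval_nonneg_of_forall_isRoot_le {p : ℝ[X]} (hp : 0 < p.leadingCoeff) {c : ℝ}
    (h : ∀ x, p.IsRoot x → x ≤ c) : 0 ≤ p.eval c := by
  by_contra! hneg
  have hdeg : 0 < p.degree := by
    by_contra! hdeg
    rw [eq_C_of_degree_le_zero hdeg, eval_C] at hneg
    rw [eq_C_of_degree_le_zero hdeg, leadingCoeff_C] at hp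
    linarith
  obtain ⟨y, hy⟩ := ((tendsto_atTop_of_leadingCoeff_nonneg p hdeg hp.le).eventually
    (Filter.eventually_ge_atTop 0)).and (Filter.eventually_ge_atTop c) |>.exists
  obtain ⟨x, hx, hroot⟩ := exists_isRoot_mem_uIcc_of_eval_mul_nonpos
    (mul_nonpos_of_nonpos_of_nonneg hneg.le hy.1)
  rw [Set.uIcc_of_le hy.2] at hx
  have hxc : x = c := le_antisymm (h x hroot) hx.1
  exact hneg.ne (hxc ▸ hroot)

lemma Polynomial.eval_map_intCast_ofReal (p : ℤ[X]) (x : ℝ) :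
    (p.map (Int.castRingHom ℂ)).eval (x : ℂ) = (((p.map (Int.castRingHom ℝ)).eval x : ℝ) : ℂ) := by
  rw [eval_map, eval_map, ← Complex.ofRealHom_eq_coe, ← Complex.ofRealHom_eq_coe, hom_eval₂,
    RingHom.ext_int (Complex.ofRealHom.comp _) (Int.castRingHom ℂ)]

section SpectralRadius

variable {d : ℕ} {A : Matrix (Fin d) (Fin d) ℤ}

lemma abs_le_specRad {x : ℝ} (hx : (A.charpoly.map (Int.castRingHom ℝ)).IsRoot x) :
    |x| ≤ specRad A := by
  refine le_csSup ?_ ⟨x, (mem_roots (A.charpoly_monic.map _).ne_zero).2 hx, rfl⟩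
  refine ((A.charpoly.map (Int.castRingHom ℝ)).roots.toFinset.image (|·|)).bddAbove.mono ?_
  rintro _ ⟨y, hy, rfl⟩
  exact Finset.mem_coe.2 (Finset.mem_image_of_mem _ (Multiset.mem_toFinset.2 hy))

lemma specRad_le_of_forall_isRoot {c : ℝ} (hc : 0 ≤ c)
    (h : ∀ x, (A.charpoly.map (Int.castRingHom ℝ)).IsRoot x → |x| ≤ c) : specRad A ≤ c :=
  Real.sSup_le (by rintro _ ⟨x, hx, rfl⟩; exact h x (isRoot_of_mem_roots hx)) hc

lemma charpoly_eval_two_nonneg (h : specRad A ≤ 2) :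
    0 ≤ (A.charpoly.map (Int.castRingHom ℝ)).eval 2 :=
  eval_nonneg_of_forall_isRoot_le (by simp [(A.charpoly_monic.map _).leadingCoeff])
    fun x hx => (le_abs_self x).trans ((abs_le_specRad hx).trans h)

lemma neg_one_pow_mul_charpoly_eval_neg_two_nonneg (h : specRad A ≤ 2) :
    0 ≤ (-1) ^ d * (A.charpoly.map (Int.castRingHom ℝ)).eval (-2) := by
  set p := A.charpoly.map (Int.castRingHom ℝ)
  have hdeg : p.natDegree = d := by
    rw [A.charpoly_monic.natDegree_map, A.charpoly_natDegree_eq_dim, Fintype.card_fin]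
  have hlc : (C ((-1) ^ d) * p.comp (-X)).leadingCoeff = 1 := by
    rw [leadingCoeff_mul, leadingCoeff_C, leadingCoeff_comp (by simp), hdeg,
      (A.charpoly_monic.map _).leadingCoeff]
    simp [← mul_pow]
  have := eval_nonneg_of_forall_isRoot_le (p := C ((-1) ^ d) * p.comp (-X)) (c := 2)
    (by rw [hlc]; exact one_pos) fun x hx => by
      have hx' : p.IsRoot (-x) := by simpa [IsRoot] using hx
      linarith [neg_le_of_abs_le ((abs_le_specRad hx').trans h)]
  simpa using this

end SpectralRadius

/-- `det (2 - B) ≥ 0` and `det (2 + B) ≥ 0` for `B = !![a, b; b, c]`. -/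
def DetBounds (a b c : ℤ) : Prop := b * b ≤ (2 - a) * (2 - c) ∧ b * b ≤ (2 + a) * (2 + c)

instance (a b c : ℤ) : Decidable (DetBounds a b c) := by unfold DetBounds; infer_instance

lemma detBounds_of_specRad_le_two {a b c : ℤ} (h : specRad !![a, b; b, c] ≤ 2) :
    DetBounds a b c := by
  have hpos := charpoly_eval_two_nonneg h
  have hneg := neg_one_pow_mul_charpoly_eval_neg_two_nonneg h
  simp only [charpoly_fin_two, trace_fin_two, det_fin_two] at hpos hneg
  constructor
  · have : (b * b : ℝ) ≤ (2 - a) * (2 - c) := by simp at hpos; linarith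
    exact_mod_cast this
  · have : (b * b : ℝ) ≤ (2 + a) * (2 + c) := by simp at hneg; linarith
    exact_mod_cast this

/-- For `χ = x³ - t x² + s x - D`: the coefficients of `χ(2 + y)` and of `-χ(-2 - y)`, as
polynomials in `y`, are nonnegative. -/
def TaylorNonnegAtTwo (t s D : ℤ) : Prop :=
  0 ≤ 8 - 4 * t + 2 * s - D ∧ 0 ≤ 12 - 4 * t + s ∧ t ≤ 6 ∧
  0 ≤ 8 + 4 * t + 2 * s + D ∧ 0 ≤ 12 + 4 * t + s ∧ -6 ≤ t

instance (t s D : ℤ) : Decidable (TaylorNonnegAtTwo t s D) := by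
  unfold TaylorNonnegAtTwo; infer_instance

lemma specRad_le_two_of_taylorNonnegAtTwo {A : Matrix (Fin 3) (Fin 3) ℤ} {t s D : ℤ}
    (hA : A.charpoly = X ^ 3 - C t * X ^ 2 + C s * X - C D) (h : TaylorNonnegAtTwo t s D) :
    specRad A ≤ 2 := by
  obtain ⟨h₁, h₂, h₃, h₄, h₅, h₆⟩ := h
  have cubic_pos : ∀ {y u v w : ℝ}, 0 < y → 0 ≤ u → 0 ≤ v → 0 ≤ w →
      0 < y ^ 3 + u * y ^ 2 + v * y + w := by
    intro y u v w hy hu hv hw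
    have := mul_nonneg hu (sq_nonneg y)
    have := mul_nonneg hv hy.le
    positivity
  refine specRad_le_of_forall_isRoot zero_le_two fun x hx => abs_le.2 ⟨?_, ?_⟩
  all_goals
    have hx : x ^ 3 - t * x ^ 2 + s * x - D = 0 := by simpa [hA] using hx
    by_contra! hlt
  · have := cubic_pos (y := -2 - x) (u := 6 + t) (v := 12 + 4 * t + s) (w := 8 + 4 * t + 2 * s + D)
      (by linarith) (by exact_mod_cast (by omega : 0 ≤ 6 + t)) (by exact_mod_cast h₅)
      (by exact_mod_cast h₄)
    linarith
  · have := cubic_pos (y := x - 2) (u := 6 - t) (v := 12 - 4 * t + s) (w := 8 - 4 * t + 2 * s - D)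
      (by linarith) (by exact_mod_cast (by omega : 0 ≤ 6 - t)) (by exact_mod_cast h₂)
      (by exact_mod_cast h₁)
    linarith

def symm3 (a b c d e f : ℤ) : Matrix (Fin 3) (Fin 3) ℤ := !![a, b, c; b, d, e; c, e, f]

lemma charpoly_symm3 (a b c d e f : ℤ) : (symm3 a b c d e f).charpoly =
    X ^ 3 - C (a + d + f) * X ^ 2 + C (a * d - b * b + a * f - c * c + d * f - e * e) * X
      - C (a * (d * f - e * e) - b * (b * f - e * c) + c * (b * e - d * c)) := by
  rw [symm3, charpoly, det_fin_three]
  simp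
  ring

lemma Matrix.IsSymm.eq_symm3 {A : Matrix (Fin 3) (Fin 3) ℤ} (h : A.IsSymm) :
    A = symm3 (A 0 0) (A 0 1) (A 0 2) (A 1 1) (A 1 2) (A 2 2) := by
  ext i j
  fin_cases i <;> fin_cases j <;> first | rfl | exact (h.apply _ _).symm

lemma deleteRC_symm3_zero (a b c d e f : ℤ) : deleteRC (symm3 a b c d e f) 0 = !![d, e; e, f] := by
  ext i j; fin_cases i <;> fin_cases j <;> rfl

lemma deleteRC_symm3_one (a b c d e f : ℤ) : deleteRC (symm3 a b c d e f) 1 = !![a, c; c, f] := by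
  ext i j; fin_cases i <;> fin_cases j <;> rfl

lemma deleteRC_symm3_two (a b c d e f : ℤ) : deleteRC (symm3 a b c d e f) 2 = !![a, b; b, d] := by
  ext i j; fin_cases i <;> fin_cases j <;> rfl

lemma exists_add_inv_eq_abs {l c : ℝ} (hc : 1 ≤ c) (hl : c + c⁻¹ ≤ |l|) :
    ∃ w : ℝ, c ≤ w ∧ w + w⁻¹ = |l| := by
  have hcl : c * c + 1 ≤ c * |l| := by
    have := mul_le_mul_of_nonneg_left hl (by linarith : 0 ≤ c)
    rwa [mul_add, mul_inv_cancel₀ (by linarith)] at this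
  have h2 : 2 ≤ |l| := by nlinarith [sq_nonneg (c - 1)]
  have h4 : 0 ≤ l ^ 2 - 4 := by nlinarith [sq_abs l]
  set r := √(l ^ 2 - 4)
  have hr : r ^ 2 = l ^ 2 - 4 := Real.sq_sqrt h4
  have hr0 : 0 ≤ r := Real.sqrt_nonneg _
  refine ⟨(|l| + r) / 2, ?_, ?_⟩
  · nlinarith [sq_abs l]
  · have hw : (|l| + r) / 2 * ((|l| - r) / 2) = 1 := by nlinarith [sq_abs l]
    rw [inv_eq_of_mul_eq_one_right hw]
    ring

section Mahler

lemma recipPoly_map_eval {d : ℕ} {p : ℤ[X]} (hp : p.natDegree ≤ d) {K : Type*} [Field K]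
    {z : K} (hz : z ≠ 0) :
    ((recipPoly d p).map (Int.castRingHom K)).eval z =
      z ^ d * (p.map (Int.castRingHom K)).eval (z + z⁻¹) := by
  rw [eval_eq_sum_range' (n := d + 1) ((natDegree_map_le).trans_lt (Nat.lt_succ_of_le hp)),
    Finset.mul_sum, recipPoly, Polynomial.map_sum, eval_finsetSum]
  refine Finset.sum_congr rfl fun i hi => ?_
  have hi : i ≤ d := Nat.lt_succ_iff.1 (Finset.mem_range.1 hi)
  have hzz : z * (z + z⁻¹) = z ^ 2 + 1 := by field_simp
  simp only [coeff_map, Polynomial.map_mul, Polynomial.map_pow, map_C, eval_mul, eval_pow, eval_C,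
    eval_X, eval_add, eval_one, Polynomial.map_add, Polynomial.map_X, Polynomial.map_one, ← hzz,
    mul_pow]
  rw [← Nat.sub_add_cancel hi, pow_add, Nat.add_sub_cancel]
  ring

lemma recipPoly_map_eval_zero {d : ℕ} {p : ℤ[X]} {K : Type*} [Field K] :
    ((recipPoly d p).map (Int.castRingHom K)).eval 0 = p.coeff d := by
  rw [recipPoly, Polynomial.map_sum, eval_finsetSum, Finset.sum_eq_single d]
  · simp
  · intro i hi hid
    have : 0 < d - i := by have := Finset.mem_range.1 hi; omega
    simp [zero_pow this.ne']
  · simp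

variable {d : ℕ} {A : Matrix (Fin d) (Fin d) ℤ}

lemma recipPoly_charpoly_map_ne_zero :
    (recipPoly d A.charpoly).map (Int.castRingHom ℂ) ≠ 0 := fun h => by
  have := recipPoly_map_eval_zero (d := d) (p := A.charpoly) (K := ℂ)
  have hd : A.charpoly.coeff d = 1 := by
    simpa [A.charpoly_natDegree_eq_dim] using A.charpoly_monic.coeff_natDegree
  simp [h, hd] at this

lemma prod_le_mahlerMeasure {s : Multiset ℂ} (hs : s.Nodup)
    (h : ∀ z ∈ s, z ∈ ((recipPoly d A.charpoly).map (Int.castRingHom ℂ)).roots) :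
    (s.map fun z => max 1 ‖z‖).prod ≤ mahlerMeasure A := by
  obtain ⟨u, hu⟩ := Multiset.le_iff_exists_add.1 ((Multiset.le_iff_subset hs).2 h)
  rw [_root_.mahlerMeasure, hu, Multiset.map_add, Multiset.prod_add]
  refine le_mul_of_one_le_right (Multiset.prod_nonneg fun x hx => ?_)
    (Multiset.one_le_prod_map fun _ _ => le_max_left _ _)
  obtain ⟨z, -, rfl⟩ := Multiset.mem_map.1 hx
  exact zero_le_one.trans (le_max_left _ _)

lemma exists_mem_roots_recipPoly_of_isRoot {l c : ℝ}
    (hl : (A.charpoly.map (Int.castRingHom ℝ)).IsRoot l) (hc : 1 ≤ c) (hcl : c + c⁻¹ ≤ |l|) :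
    ∃ z ∈ ((recipPoly d A.charpoly).map (Int.castRingHom ℂ)).roots,
      c ≤ ‖z‖ ∧ z + z⁻¹ = l := by
  obtain ⟨w, hcw, hw⟩ := exists_add_inv_eq_abs hc hcl
  obtain ⟨x, hxw, hx⟩ : ∃ x : ℝ, |x| = w ∧ x + x⁻¹ = l := by
    rcases abs_cases l with ⟨hl, -⟩ | ⟨hl, -⟩
    · exact ⟨w, abs_of_nonneg (by linarith), hw.trans hl⟩
    · exact ⟨-w, by rw [abs_neg, abs_of_nonneg (by linarith)], by rw [inv_neg, ← neg_add, hw, hl,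
        neg_neg]⟩
  have hx0 : (x : ℂ) ≠ 0 := by
    rw [Complex.ofReal_ne_zero]; rintro rfl; simp at hxw; linarith
  have hxl : (x : ℂ) + (x : ℂ)⁻¹ = l := by exact_mod_cast hx
  refine ⟨x, (mem_roots recipPoly_charpoly_map_ne_zero).2 ?_, ?_, hxl⟩
  · rw [IsRoot, recipPoly_map_eval (by rw [A.charpoly_natDegree_eq_dim, Fintype.card_fin]) hx0,
      hxl, eval_map_intCast_ofReal, hl.eq_zero, Complex.ofReal_zero, mul_zero]
  · rwa [Complex.norm_real, Real.norm_eq_abs, hxw]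

lemma le_mahlerMeasure_of_isRoot {l c : ℝ}
    (hl : (A.charpoly.map (Int.castRingHom ℝ)).IsRoot l) (hc : 1 ≤ c) (hcl : c + c⁻¹ ≤ |l|) :
    c ≤ mahlerMeasure A := by
  obtain ⟨z, hz, hcz, -⟩ := exists_mem_roots_recipPoly_of_isRoot hl hc hcl
  have := prod_le_mahlerMeasure (s := {z}) (Multiset.nodup_singleton z) (by simpa using hz)
  simp only [Multiset.map_singleton, Multiset.prod_singleton] at this
  exact hcz.trans ((le_max_right _ _).trans this)

lemma mul_le_mahlerMeasure_of_isRoot {l₁ l₂ c₁ c₂ : ℝ}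
    (hl₁ : (A.charpoly.map (Int.castRingHom ℝ)).IsRoot l₁)
    (hl₂ : (A.charpoly.map (Int.castRingHom ℝ)).IsRoot l₂) (hl : l₁ ≠ l₂)
    (hc₁ : 1 ≤ c₁) (hcl₁ : c₁ + c₁⁻¹ ≤ |l₁|) (hc₂ : 1 ≤ c₂) (hcl₂ : c₂ + c₂⁻¹ ≤ |l₂|) :
    c₁ * c₂ ≤ mahlerMeasure A := by
  obtain ⟨z₁, hz₁, hcz₁, hzl₁⟩ := exists_mem_roots_recipPoly_of_isRoot hl₁ hc₁ hcl₁
  obtain ⟨z₂, hz₂, hcz₂, hzl₂⟩ := exists_mem_roots_recipPoly_of_isRoot hl₂ hc₂ hcl₂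
  have hz : z₁ ≠ z₂ := by
    rintro rfl; exact hl (Complex.ofReal_injective (hzl₁.symm.trans hzl₂))
  have := prod_le_mahlerMeasure (s := z₁ ::ₘ {z₂}) (by simpa using hz)
    (by simp only [Multiset.mem_cons, Multiset.mem_singleton, forall_eq_or_imp, forall_eq]
        exact ⟨hz₁, hz₂⟩)
  simp only [Multiset.map_cons, Multiset.map_singleton, Multiset.prod_cons,
    Multiset.prod_singleton] at this
  refine le_trans ?_ this
  exact mul_le_mul (hcz₁.trans (le_max_right _ _)) (hcz₂.trans (le_max_right _ _))
    (by linarith) (zero_le_one.trans (le_max_left _ _))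

end Mahler

lemma charpoly_symm3_map_eval (a b c d e f : ℤ) (x : ℝ) :
    ((!![a, b, c; b, d, e; c, e, f] : Matrix (Fin 3) (Fin 3) ℤ).charpoly.map
      (Int.castRingHom ℝ)).eval x =
      x ^ 3 - (a + d + f) * x ^ 2 + (a * d - b * b + a * f - c * c + d * f - e * e) * x
        - (a * (d * f - e * e) - b * (b * f - e * c) + c * (b * e - d * c)) := by
  rw [show !![a, b, c; b, d, e; c, e, f] = symm3 a b c d e f from rfl, charpoly_symm3]
  simp

section Bounds

variable {d : ℕ} {A : Matrix (Fin d) (Fin d) ℤ}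

lemma sqrt_five_le_specRad_of_isRoot {l : ℝ} (hl : (A.charpoly.map (Int.castRingHom ℝ)).IsRoot l)
    (h : 5 ≤ l ^ 2) : √5 ≤ specRad A :=
  (Real.sqrt_le_left (abs_nonneg l)).2 (by rwa [sq_abs]) |>.trans (abs_le_specRad hl)

/-- `2.56155 ≥ c + c⁻¹` for `c = 2.08101 > 2.081`; the largest eigenvalue of `E6`,
`(1 + √17) / 2 ≈ 2.5615528`, barely clears it. -/
lemma bounds_of_eval_mul_nonpos {a b : ℝ} (ha : 2.56155 ≤ a) (hab : a ≤ b)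
    (h : (A.charpoly.map (Int.castRingHom ℝ)).eval a *
      (A.charpoly.map (Int.castRingHom ℝ)).eval b ≤ 0) :
    √5 ≤ specRad A ∧ (2.081 : ℝ) < mahlerMeasure A := by
  obtain ⟨l, hl, hroot⟩ := exists_isRoot_mem_uIcc_of_eval_mul_nonpos h
  rw [Set.uIcc_of_le hab] at hl
  have hl' : 2.56155 ≤ |l| := ha.trans (hl.1.trans (le_abs_self l))
  refine ⟨sqrt_five_le_specRad_of_isRoot hroot (by nlinarith [sq_abs l]), ?_⟩
  exact (by norm_num : (2.081 : ℝ) < 2.08101).trans_le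
    (le_mahlerMeasure_of_isRoot hroot (by norm_num) (le_trans (by norm_num) hl'))

end Bounds

/-- The largest eigenvalue `≈ 2.391` of `E7` alone only gives `≈ 1.851`; the eigenvalue
`≈ -2.164` supplies the rest. -/
lemma E7_bounds : √5 ≤ specRad E7 ∧ (2.081 : ℝ) < mahlerMeasure E7 := by
  obtain ⟨l₁, hl₁, hroot₁⟩ := exists_isRoot_mem_uIcc_of_eval_mul_nonpos
    (p := E7.charpoly.map (Int.castRingHom ℝ)) (a := 2.25) (b := 2.5)
    (by norm_num [E7, charpoly_symm3_map_eval])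
  obtain ⟨l₂, hl₂, hroot₂⟩ := exists_isRoot_mem_uIcc_of_eval_mul_nonpos
    (p := E7.charpoly.map (Int.castRingHom ℝ)) (a := -2.5) (b := -2.12)
    (by norm_num [E7, charpoly_symm3_map_eval])
  rw [Set.uIcc_of_le (by norm_num)] at hl₁ hl₂
  refine ⟨sqrt_five_le_specRad_of_isRoot hroot₁ (by nlinarith [hl₁.1]), ?_⟩
  exact (by norm_num : (2.081 : ℝ) < 1.5 * 1.4).trans_le
    (mul_le_mahlerMeasure_of_isRoot hroot₁ hroot₂ (by linarith [hl₁.1, hl₂.2]) (by norm_num)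
      (by rw [abs_of_pos (by linarith [hl₁.1])]; norm_num; linarith [hl₁.1]) (by norm_num)
      (by rw [abs_of_neg (by linarith [hl₂.2])]; norm_num; linarith [hl₂.2]))

lemma E8_bounds : √5 ≤ specRad E8 ∧ (2.081 : ℝ) < mahlerMeasure E8 := by
  have h5 : √5 ^ 2 = 5 := Real.sq_sqrt (by norm_num)
  have hroot : ∀ l : ℝ, l ^ 2 = 5 → (E8.charpoly.map (Int.castRingHom ℝ)).IsRoot l := fun l hl => by
    simp only [IsRoot, E8, charpoly_symm3_map_eval]
    push_cast
    linear_combination l * hl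
  have hc : (1.6 : ℝ) + 1.6⁻¹ ≤ |√5| := by
    rw [abs_of_nonneg (Real.sqrt_nonneg 5), Real.le_sqrt (by norm_num) (by norm_num)]; norm_num
  refine ⟨sqrt_five_le_specRad_of_isRoot (hroot _ h5) h5.ge, ?_⟩
  exact (by norm_num : (2.081 : ℝ) < 1.6 * 1.6).trans_le
    (mul_le_mahlerMeasure_of_isRoot (hroot _ h5) (hroot (-√5) (by rw [neg_sq, h5]))
      (by have := Real.sqrt_pos.2 (by norm_num : (0:ℝ) < 5); linarith) (by norm_num) hc
      (by norm_num) (by rwa [abs_neg]))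

lemma listed_bounds : ∀ M ∈ [E1, E2, E3, E4, E5, E6, E7, E8],
    √5 ≤ specRad M ∧ (2.081 : ℝ) < mahlerMeasure M := by
  intro M hM
  simp only [List.mem_cons, List.not_mem_nil, or_false] at hM
  rcases hM with rfl | rfl | rfl | rfl | rfl | rfl | rfl | rfl
  · exact bounds_of_eval_mul_nonpos (a := 3) (b := 5) (by norm_num) (by norm_num)
      (by norm_num [E1, charpoly_symm3_map_eval])
  · exact bounds_of_eval_mul_nonpos (a := 3) (b := 4) (by norm_num) (by norm_num)
      (by norm_num [E2, charpoly_symm3_map_eval])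
  · exact bounds_of_eval_mul_nonpos (a := 2.6) (b := 3) (by norm_num) (by norm_num)
      (by norm_num [E3, charpoly_symm3_map_eval])
  · exact bounds_of_eval_mul_nonpos (a := 2.6) (b := 3) (by norm_num) (by norm_num)
      (by norm_num [E4, charpoly_symm3_map_eval])
  · exact bounds_of_eval_mul_nonpos (a := 2.6) (b := 4) (by norm_num) (by norm_num)
      (by norm_num [E5, charpoly_symm3_map_eval])
  · exact bounds_of_eval_mul_nonpos (a := 2.56155) (b := 3) (by norm_num) (by norm_num)
      (by norm_num [E6, charpoly_symm3_map_eval])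
  · exact E7_bounds
  · exact E8_bounds

section SignedPermutation

variable {n : Type*}

def signedPermConj (ε : ℤ) (s : n → ℤ) (σ : Equiv.Perm n) (A : Matrix n n ℤ) : Matrix n n ℤ :=
  of fun i j => ε * (s i * s j * A (σ i) (σ j))

lemma isSymm_signedPermConj {A : Matrix n n ℤ} (hA : A.IsSymm) (ε : ℤ) (s : n → ℤ)
    (σ : Equiv.Perm n) : (signedPermConj ε s σ A).IsSymm := by
  ext i j
  simp only [transpose_apply, signedPermConj, of_apply, hA.apply (σ i) (σ j), mul_comm (s i)]

lemma mequiv_signedPermConj [Fintype n] [DecidableEq n] (A : Matrix n n ℤ) {ε : ℤ}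
    (hε : ε = 1 ∨ ε = -1) {s : n → ℤ} (hs : ∀ i, s i * s i = 1) (σ : Equiv.Perm n) :
    MEquiv A (signedPermConj ε s σ A) := by
  have hD : diagonal s * diagonal s = 1 := by
    rw [diagonal_mul_diagonal, ← diagonal_one]; exact congrArg diagonal (funext hs)
  have hQR : σ.permMatrix ℤ * σ⁻¹.permMatrix ℤ = 1 := by simp [← permMatrix_mul]
  have hRQ : σ⁻¹.permMatrix ℤ * σ.permMatrix ℤ = 1 := by simp [← permMatrix_mul]
  refine ⟨ε, σ⁻¹.permMatrix ℤ * diagonal s, hε, ?_, ?_, ?_⟩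
  · rw [transpose_mul, transpose_permMatrix, inv_inv, diagonal_transpose, Matrix.mul_assoc,
      ← Matrix.mul_assoc (σ.permMatrix ℤ), hQR, Matrix.one_mul, hD]
  · rw [transpose_mul, transpose_permMatrix, inv_inv, diagonal_transpose, Matrix.mul_assoc,
      ← Matrix.mul_assoc (diagonal s), hD, Matrix.one_mul, hRQ]
  · have hsub : σ.permMatrix ℤ * A * σ⁻¹.permMatrix ℤ = A.submatrix σ σ := by
      rw [PEquiv.toMatrix_toPEquiv_mul, PEquiv.mul_toMatrix_toPEquiv, submatrix_submatrix,
        Equiv.Perm.inv_def, Equiv.symm_symm]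
      rfl
    ext i j
    rw [transpose_mul, transpose_permMatrix, inv_inv, diagonal_transpose, ← Matrix.mul_assoc,
      Matrix.mul_assoc (diagonal s), Matrix.mul_assoc (diagonal s), hsub]
    simp only [signedPermConj, of_apply, Matrix.smul_apply, smul_eq_mul, diagonal_mul,
      mul_diagonal, submatrix_apply]
    ring

end SignedPermutation

def upperEntries (M : Matrix (Fin 3) (Fin 3) ℤ) : ℤ × ℤ × ℤ × ℤ × ℤ × ℤ :=
  (M 0 0, M 0 1, M 0 2, M 1 1, M 1 2, M 2 2)

lemma eq_of_upperEntries_eq {M N : Matrix (Fin 3) (Fin 3) ℤ} (hM : M.IsSymm) (hN : N.IsSymm)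
    (h : upperEntries M = upperEntries N) : M = N := by
  simp only [upperEntries, Prod.mk.injEq] at h
  rw [hM.eq_symm3, hN.eq_symm3, h.1, h.2.1, h.2.2.1, h.2.2.2.1, h.2.2.2.2.1, h.2.2.2.2.2]

def signs : List ℤ := [1, -1]

def perms3 : List (Equiv.Perm (Fin 3)) :=
  [1, Equiv.swap 0 1, Equiv.swap 0 2, Equiv.swap 1 2, Equiv.swap 0 1 * Equiv.swap 1 2,
    Equiv.swap 1 2 * Equiv.swap 0 1]

/-- Comparing upper triangles only keeps the kernel evaluation in `classification_of_entries`
cheap. -/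
def IsSignedPermConj (A B : Matrix (Fin 3) (Fin 3) ℤ) : Prop :=
  ∃ ε ∈ signs, ∃ s₁ ∈ signs, ∃ s₂ ∈ signs, ∃ σ ∈ perms3,
    upperEntries B = upperEntries (signedPermConj ε ![1, s₁, s₂] σ A)

instance (A B : Matrix (Fin 3) (Fin 3) ℤ) : Decidable (IsSignedPermConj A B) := by
  unfold IsSignedPermConj; infer_instance

lemma IsSignedPermConj.mequiv {A B : Matrix (Fin 3) (Fin 3) ℤ} (h : IsSignedPermConj A B)
    (hA : A.IsSymm) (hB : B.IsSymm) : MEquiv A B := by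
  obtain ⟨ε, hε, s₁, hs₁, s₂, hs₂, σ, -, hAB⟩ := h
  have hsigns : ∀ x ∈ signs, x = 1 ∨ x = -1 := by simp [signs]
  have hsq : ∀ i, ![1, s₁, s₂] i * ![1, s₁, s₂] i = 1 := by
    intro i
    fin_cases i
    · rfl
    · rcases hsigns s₁ hs₁ with rfl | rfl <;> rfl
    · rcases hsigns s₂ hs₂ with rfl | rfl <;> rfl
  rw [eq_of_upperEntries_eq hB (isSymm_signedPermConj hA _ _ _) hAB]
  exact mequiv_signedPermConj A (hsigns ε hε) hsq σ

def entryRange : List ℤ := [-2, -1, 0, 1, 2]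

def targets : Fin 8 → Matrix (Fin 3) (Fin 3) ℤ := ![E1, E2, E3, E4, E5, E6, E7, E8]

lemma isSymm_targets : ∀ k, (targets k).IsSymm := by decide

lemma classification_of_entries : ∀ a ∈ entryRange, ∀ b ∈ entryRange,
    ∀ c ∈ entryRange, ∀ d ∈ entryRange, ∀ e ∈ entryRange, ∀ f ∈ entryRange,
    DetBounds d e f → DetBounds a c f → DetBounds a b d →
    ¬ TaylorNonnegAtTwo (a + d + f) (a * d - b * b + a * f - c * c + d * f - e * e)
      (a * (d * f - e * e) - b * (b * f - e * c) + c * (b * e - d * c)) →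
    2 ∈ [|a|, |b|, |c|, |d|, |e|, |f|] →
    ∃ k : Fin 8, IsSignedPermConj (symm3 a b c d e f) (targets k) := by
  decide +kernel

lemma exists_mequiv_targets {A : Matrix (Fin 3) (Fin 3) ℤ} (hA : A.IsSymm)
    (hmin : MinimalNoncyclotomic A) (hbd : ∀ i j, |A i j| ≤ 2) (htwo : ∃ i j, |A i j| = 2) :
    ∃ k, MEquiv A (targets k) := by
  have hrange : ∀ i j, A i j ∈ entryRange := fun i j => by
    have := abs_le.1 (hbd i j)
    simp only [entryRange, List.mem_cons, List.not_mem_nil, or_false]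
    omega
  rw [hA.eq_symm3] at hmin htwo
  obtain ⟨hnoncyc, hminors⟩ := hmin
  have hsurvivor := classification_of_entries _ (hrange 0 0) _ (hrange 0 1) _ (hrange 0 2)
    _ (hrange 1 1) _ (hrange 1 2) _ (hrange 2 2)
    (detBounds_of_specRad_le_two (by simpa only [deleteRC_symm3_zero] using hminors 0))
    (detBounds_of_specRad_le_two (by simpa only [deleteRC_symm3_one] using hminors 1))
    (detBounds_of_specRad_le_two (by simpa only [deleteRC_symm3_two] using hminors 2))
    (fun h => (specRad_le_two_of_taylorNonnegAtTwo (charpoly_symm3 ..) h).not_gt hnoncyc)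
  obtain ⟨k, hk⟩ := hsurvivor (by
    obtain ⟨i, j, h⟩ := htwo
    fin_cases i <;> fin_cases j <;> simp [symm3] at h <;> simp [h])
  exact ⟨k, hA.eq_symm3 ▸ hk.mequiv (hA.eq_symm3 ▸ hA) (isSymm_targets k)⟩

/-- every 3×3 minimal noncyclotomic integer symmetric matrix with entries
of absolute value at most 2, some entry of absolute value exactly 2, is equivalent to one
of eight matrices; each of those has spectral radius at least `√5` and Mahler measure
greater than `2.081`. -/
theorem statement12 :
    (∀ A : Matrix (Fin 3) (Fin 3) ℤ, A.IsSymm → MinimalNoncyclotomic A →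
      (∀ i j, |A i j| ≤ 2) → (∃ i j, |A i j| = 2) →
      (MEquiv A E1 ∨ MEquiv A E2 ∨ MEquiv A E3 ∨ MEquiv A E4 ∨
       MEquiv A E5 ∨ MEquiv A E6 ∨ MEquiv A E7 ∨ MEquiv A E8)) ∧
    (∀ M ∈ [E1, E2, E3, E4, E5, E6, E7, E8],
      Real.sqrt 5 ≤ specRad M ∧ (2.081 : ℝ) < mahlerMeasure M) := by
  refine ⟨fun A hA hmin hbd htwo => ?_, listed_bounds⟩
  simpa [Fin.exists_fin_succ, targets] using exists_mequiv_targets hA hmin hbd htwo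

end
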